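/- arXiv:1905.12309 — 4 statements merged into one kernel-verified Lean document; each statement's English description precedes it below -/
import Mathlib

section
/- For N odd, the polynomial X^N - 1 in (Z/4Z)[X] is squarefree, i.e., it has no repeated monic irreducible factors. -/
open Polynomial

theorem Polynomial.separable_X_pow_sub_one {R : Type*} [CommRing R] {n : ℕ}
    (hn : IsUnit (n : R)) : (X ^ n - 1 : R[X]).Separable := by
  simpa using separable_X_pow_sub_C_unit (1 : Rˣ) hn

theorem Odd.isUnit_natCast_zmod_two_pow {n : ℕ} (hn : Odd n) (k : ℕ) :
    IsUnit (n : ZMod (2 ^ k)) :=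
  (ZMod.isUnit_iff_coprime n _).mpr (hn.coprime_two_right.pow_right k)

theorem squarefree_X_pow_sub_one (N : ℕ) (hN : Odd N) :
    Squarefree ((X : (ZMod 4)[X]) ^ N - 1) :=
  (separable_X_pow_sub_one (hN.isUnit_natCast_zmod_two_pow 2)).squarefree
end

section
/- Let N be odd and let X^N - 1 = f g h be a factorization into monic polynomials in (Z/4Z)[X] with f, g, h pairwise coprime. If gcd(h, f*) = 1 and lcm(f, h*) = X^N - 1 (up to units), then g = 1. -/
/-!
Since `X ^ N - 1` is a common multiple of `f` and `h*`, it divides `f * h*`, so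
`N ≤ deg f + deg h* ≤ deg f + deg h`; as `N = deg f + deg g + deg h`, the monic `g` has degree `0`.
-/

open Polynomial

/-- The reciprocal polynomial `f*(X) = a₀⁻¹ X^(deg f) f(1/X)` of a polynomial over `ZMod 4`. -/
noncomputable def recip (f : (ZMod 4)[X]) : (ZMod 4)[X] :=
  C (f.coeff 0)⁻¹ * f.reverse


/-- `m` is a least common multiple of `a` and `b`. -/
def IsLcm (a b m : (ZMod 4)[X]) : Prop :=
  a ∣ m ∧ b ∣ m ∧ ∀ c : (ZMod 4)[X], a ∣ c → b ∣ c → m ∣ c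

theorem natDegree_recip_le (f : (ZMod 4)[X]) : (recip f).natDegree ≤ f.natDegree :=
  (natDegree_C_mul_le _ _).trans (reverse_natDegree_le f)

theorem IsLcm.dvd_mul {a b m : (ZMod 4)[X]} (h : IsLcm a b m) : m ∣ a * b :=
  h.2.2 _ (dvd_mul_right a b) (dvd_mul_left b a)

theorem Polynomial.Monic.natDegree_le_of_dvd {R : Type*} [Semiring R] {p q : R[X]}
    (hp : p.Monic) (hpq : p ∣ q) (hq : q ≠ 0) : p.natDegree ≤ q.natDegree := by
  obtain ⟨c, rfl⟩ := hpq
  have hc : c ≠ 0 := by rintro rfl; exact hq (mul_zero p)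
  rw [hp.natDegree_mul' hc]
  exact Nat.le_add_right _ _

theorem Polynomial.Monic.eq_one_of_mul_mul_dvd {R : Type*} [Semiring R] {f g h r : R[X]}
    (hf : f.Monic) (hg : g.Monic) (hh : h.Monic) (hr : r ≠ 0)
    (hdeg : r.natDegree ≤ h.natDegree) (hdvd : f * g * h ∣ f * r) : g = 1 := by
  have hle := ((hf.mul hg).mul hh).natDegree_le_of_dvd hdvd (hf.mul_right_ne_zero hr)
  rw [(hf.mul hg).natDegree_mul hh, hf.natDegree_mul hg] at hle
  have hfr : (f * r).natDegree ≤ f.natDegree + r.natDegree := natDegree_mul_le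
  exact hg.natDegree_eq_zero.mp (by omega)

theorem g_eq_one_general (N : ℕ) (f g h : (ZMod 4)[X])
    (hf : f.Monic) (hg : g.Monic) (hh : h.Monic)
    (hfgh : f * g * h = (X : (ZMod 4)[X]) ^ N - 1)
    (hlcm : IsLcm f (recip h) ((X : (ZMod 4)[X]) ^ N - 1)) :
    g = 1 := by
  have : Fact (1 < 4) := ⟨by norm_num⟩
  have hne : (X : (ZMod 4)[X]) ^ N - 1 ≠ 0 := hfgh ▸ ((hf.mul hg).mul hh).ne_zero
  -- `recip h` would be `0` if `h.coeff 0` were not a unit (junk inverse in `ZMod 4`)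
  have hrecip : recip h ≠ 0 := by
    rintro h0
    exact hne (zero_dvd_iff.mp (h0 ▸ hlcm.2.1))
  exact hf.eq_one_of_mul_mul_dvd hg hh hrecip (natDegree_recip_le h) (hfgh ▸ hlcm.dvd_mul)

theorem g_eq_one (N : ℕ) (hN : Odd N) (f g h : (ZMod 4)[X])
    (hf : f.Monic) (hg : g.Monic) (hh : h.Monic)
    (hfgh : f * g * h = (X : (ZMod 4)[X]) ^ N - 1)
    (hfg : IsCoprime f g) (hfh : IsCoprime f h) (hgh : IsCoprime g h)
    (hgcd : IsCoprime h (recip f))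
    (hlcm : IsLcm f (recip h) ((X : (ZMod 4)[X]) ^ N - 1)) :
    g = 1 :=
  g_eq_one_general N f g h hf hg hh hfgh hlcm
end

section
/- Let N be odd and let X^N - 1 = f h be a factorization into monic coprime polynomials in (Z/4Z)[X]. If gcd(h, f*) = 1 and lcm(f, h*) = X^N - 1, then f and h are both self-reciprocal, i.e., f = f* and h = h*. -/
open Polynomial

instance : Fact (1 < 4) := ⟨by norm_num⟩

/-!
Reversal is multiplicative on monic polynomials and sends `X^N - 1` to `1 - X^N`, so after the
normalisation in `recip` we get `f* h* = X^N - 1 = f h`. Hence `h` divides `f* h*`; being coprime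
to `f*`, it divides `h*`, which is monic of the same degree, so `h = h*`. Cancelling the monic `h`
in `f* h = f h` gives `f = f*`.
-/

lemma isUnit_coeff_zero_of_dvd_X_pow_sub_one {R : Type*} [CommRing R] {f : R[X]} {N : ℕ}
    (hN : N ≠ 0) (hf : f ∣ X ^ N - 1) : IsUnit (f.coeff 0) := by
  obtain ⟨g, hfg⟩ := hf
  have hconst : f.coeff 0 * g.coeff 0 = -1 := by
    simpa [mul_coeff_zero, coeff_X_pow, hN.symm] using (congrArg (coeff · 0) hfg).symm
  exact isUnit_of_mul_isUnit_left (hconst ▸ isUnit_one.neg)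

lemma ZMod.mul_inv_of_isUnit_of_isUnit {n : ℕ} {a b : ZMod n} (ha : IsUnit a) (hb : IsUnit b) :
    (a * b)⁻¹ = a⁻¹ * b⁻¹ := by
  obtain ⟨u, rfl⟩ := ha
  obtain ⟨v, rfl⟩ := hb
  rw [← Units.val_mul, ZMod.inv_coe_unit, ZMod.inv_coe_unit, ZMod.inv_coe_unit, mul_inv,
    Units.val_mul, mul_comm]

lemma recip_mul {f g : (ZMod 4)[X]} (hf : f.Monic) (hg : g.Monic) (hf0 : IsUnit (f.coeff 0))
    (hg0 : IsUnit (g.coeff 0)) : recip (f * g) = recip f * recip g := by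
  rw [recip, recip, recip, reverse_mul (by simp [hf.leadingCoeff, hg.leadingCoeff]),
    mul_coeff_zero, ZMod.mul_inv_of_isUnit_of_isUnit hf0 hg0, C_mul]
  ring

lemma recip_X_pow_sub_one {N : ℕ} (hN : N ≠ 0) :
    recip ((X : (ZMod 4)[X]) ^ N - 1) = X ^ N - 1 := by
  have hdeg : ((X : (ZMod 4)[X]) ^ N - 1).natDegree = N := by
    rw [sub_eq_add_neg, ← C_1, ← C_neg, natDegree_X_pow_add_C]
  have hrev : ((X : (ZMod 4)[X]) ^ N - 1).reverse = 1 - X ^ N := by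
    rw [reverse, hdeg, reflect_sub, reflect_one, reflect_monomial, revAt_le le_rfl,
      Nat.sub_self, pow_zero]
  simp only [recip, hrev, coeff_sub, coeff_X_pow, coeff_one, hN.symm, if_false, if_true,
    zero_sub, ZMod.inv_neg_one, C_neg, C_1]
  ring

lemma isUnit_inv_coeff_zero {f : (ZMod 4)[X]} (hu : IsUnit (f.coeff 0)) :
    IsUnit (f.coeff 0)⁻¹ :=
  IsUnit.of_mul_eq_one _ (ZMod.inv_mul_of_unit _ hu)

lemma natDegree_recip {f : (ZMod 4)[X]} (hu : IsUnit (f.coeff 0)) :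
    (recip f).natDegree = f.natDegree := by
  rw [recip, natDegree_C_mul_of_isUnit (isUnit_inv_coeff_zero hu), reverse_natDegree,
    natTrailingDegree_eq_zero.mpr (.inr hu.ne_zero), Nat.sub_zero]

lemma monic_recip {f : (ZMod 4)[X]} (hu : IsUnit (f.coeff 0)) : (recip f).Monic := by
  rw [Monic, recip, leadingCoeff_C_mul_of_isUnit (isUnit_inv_coeff_zero hu), reverse_leadingCoeff,
    trailingCoeff_eq_coeff_zero hu.ne_zero, ZMod.inv_mul_of_unit _ hu]

theorem selfReciprocal_of_conditions_general (N : ℕ) (f h : (ZMod 4)[X])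
    (hf : f.Monic) (hh : h.Monic)
    (hfh : f * h = (X : (ZMod 4)[X]) ^ N - 1)
    (hgcd : IsCoprime h (recip f)) :
    recip f = f ∧ recip h = h := by
  have hN : N ≠ 0 := by
    rintro rfl
    exact (hf.mul hh).ne_zero (by simpa using hfh)
  have hf0 := isUnit_coeff_zero_of_dvd_X_pow_sub_one hN (hfh ▸ dvd_mul_right f h)
  have hh0 := isUnit_coeff_zero_of_dvd_X_pow_sub_one hN (hfh ▸ dvd_mul_left h f)
  have hrecip : recip f * recip h = f * h := by
    rw [← recip_mul hf hh hf0 hh0, hfh, recip_X_pow_sub_one hN]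
  have hh_dvd : h ∣ recip h := by
    refine hgcd.dvd_of_dvd_mul_left ?_
    rw [hrecip]
    exact dvd_mul_left h f
  have hh_self : recip h = h :=
    eq_of_monic_of_dvd_of_natDegree_le hh (monic_recip hh0) hh_dvd (natDegree_recip hh0).le
  refine ⟨hh.isRegular.right ?_, hh_self⟩
  rwa [hh_self] at hrecip

theorem selfReciprocal_of_conditions (N : ℕ) (hN : Odd N) (f h : (ZMod 4)[X])
    (hf : f.Monic) (hh : h.Monic)
    (hfh : f * h = (X : (ZMod 4)[X]) ^ N - 1)
    (hcop : IsCoprime f h)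
    (hgcd : IsCoprime h (recip f))
    (hlcm : IsLcm f (recip h) ((X : (ZMod 4)[X]) ^ N - 1)) :
    recip f = f ∧ recip h = h :=
  selfReciprocal_of_conditions_general N f h hf hh hfh hgcd
end

section
/- In (Z/4Z)[X] one has the factorization X^7 - 1 = (X - 1)(X^3 + 2X^2 + X - 1)(X^3 - X^2 + 2X - 1), and each of the three factors is irreducible in (Z/4Z)[X]. -/
/-!
Reduction `ZMod 4 → ZMod 2` is surjective with nilpotent kernel, and so is the induced map on
polynomials; such a map reflects units, hence also irreducibility. Modulo 2 the three factors become
`X - 1`, `X³ + X + 1` and `X³ + X² + 1`, and the two cubics have no root in `ZMod 2`.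
The factorization is the identity
`X⁷ - 1 - (X - 1)(X³ + 2X² + X - 1)(X³ - X² + 2X - 1) = 4(X² - X)`.
-/

open Polynomial

theorem RingHom.isLocalHom_of_surjective_of_ker_le_nilradical {R S : Type*} [CommRing R]
    [CommRing S] {φ : R →+* S} (hφ : Function.Surjective φ) (hker : ker φ ≤ nilradical R) :
    IsLocalHom φ where
  map_nonunit a ha := by
    obtain ⟨c, hc⟩ := ha.exists_right_inv
    obtain ⟨b, rfl⟩ := hφ c
    have hab : a * b - 1 ∈ ker φ := by rw [mem_ker, map_sub, map_mul, hc, map_one, sub_self]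
    have := (mem_nilradical.mp (hker hab)).isUnit_add_one
    rw [sub_add_cancel] at this
    exact isUnit_of_mul_isUnit_left this

namespace Polynomial

variable {R S : Type*} [CommRing R] [CommRing S]

theorem ker_mapRingHom_le_nilradical {φ : R →+* S} (hker : RingHom.ker φ ≤ nilradical R) :
    RingHom.ker (mapRingHom φ) ≤ nilradical R[X] := by
  intro p hp
  rw [RingHom.mem_ker, coe_mapRingHom] at hp
  refine mem_nilradical.mpr (Polynomial.isNilpotent_iff.mpr fun i ↦ mem_nilradical.mp (hker ?_))
  rw [RingHom.mem_ker, ← coeff_map, hp, coeff_zero]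

theorem irreducible_of_irreducible_map_of_ker_le_nilradical {φ : R →+* S}
    (hφ : Function.Surjective φ) (hker : RingHom.ker φ ≤ nilradical R) {p : R[X]}
    (h : Irreducible (p.map φ)) : Irreducible p :=
  have := (mapRingHom φ).isLocalHom_of_surjective_of_ker_le_nilradical (map_surjective φ hφ)
    (ker_mapRingHom_le_nilradical hker)
  Irreducible.of_map (f := mapRingHom φ) h

theorem irreducible_of_natDegree_le_three_of_forall_not_isRoot {K : Type*} [Field K] {p : K[X]}
    (hp2 : 2 ≤ p.natDegree) (hp3 : p.natDegree ≤ 3) (h : ∀ x, ¬ p.IsRoot x) :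
    Irreducible p := by
  rw [irreducible_iff_roots_eq_zero_of_degree_le_three hp2 hp3, Multiset.eq_zero_iff_forall_notMem]
  exact fun x hx ↦ h x (isRoot_of_mem_roots hx)

end Polynomial

theorem ZMod.ker_castHom_four_two_le_nilradical :
    RingHom.ker (ZMod.castHom (by norm_num : 2 ∣ 4) (ZMod 2)) ≤ nilradical (ZMod 4) := by
  intro x hx
  rw [RingHom.mem_ker] at hx
  refine mem_nilradical.mpr ⟨2, ?_⟩
  revert x hx
  decide

theorem irreducible_of_irreducible_map_castHom_four_two {p : (ZMod 4)[X]}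
    (h : Irreducible (p.map (ZMod.castHom (by norm_num : 2 ∣ 4) (ZMod 2)))) : Irreducible p :=
  irreducible_of_irreducible_map_of_ker_le_nilradical (ZMod.castHom_surjective _)
    ZMod.ker_castHom_four_two_le_nilradical h

theorem irreducible_X_pow_three_add_X_add_one : Irreducible (X ^ 3 + X + 1 : (ZMod 2)[X]) := by
  have hdeg : (X ^ 3 + X + 1 : (ZMod 2)[X]).natDegree = 3 := by compute_degree!
  refine irreducible_of_natDegree_le_three_of_forall_not_isRoot (by omega) (by omega) ?_
  simp only [IsRoot, eval_add, eval_pow, eval_X, eval_one]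
  decide

theorem irreducible_X_pow_three_add_X_sq_add_one :
    Irreducible (X ^ 3 + X ^ 2 + 1 : (ZMod 2)[X]) := by
  have hdeg : (X ^ 3 + X ^ 2 + 1 : (ZMod 2)[X]).natDegree = 3 := by compute_degree!
  refine irreducible_of_natDegree_le_three_of_forall_not_isRoot (by omega) (by omega) ?_
  simp only [IsRoot, eval_add, eval_pow, eval_X, eval_one]
  decide

theorem X_pow_seven_sub_one_factorization :
    ((X : (ZMod 4)[X]) ^ 7 - 1 =
        (X - 1) * (X ^ 3 + 2 * X ^ 2 + X - 1) * (X ^ 3 - X ^ 2 + 2 * X - 1)) ∧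
      Irreducible ((X : (ZMod 4)[X]) - 1) ∧
      Irreducible ((X : (ZMod 4)[X]) ^ 3 + 2 * X ^ 2 + X - 1) ∧
      Irreducible ((X : (ZMod 4)[X]) ^ 3 - X ^ 2 + 2 * X - 1) := by
  have h4 : (4 : (ZMod 4)[X]) = 0 := CharP.ofNat_eq_zero _ 4
  have h2 : (2 : (ZMod 2)[X]) = 0 := CharP.ofNat_eq_zero _ 2
  refine ⟨by linear_combination (X ^ 2 - X) * h4, ?_, ?_, ?_⟩ <;>
    apply irreducible_of_irreducible_map_castHom_four_two <;>
    simp only [Polynomial.map_add, Polynomial.map_sub, Polynomial.map_mul, Polynomial.map_pow,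
      Polynomial.map_ofNat, Polynomial.map_one, map_X]
  · simpa using irreducible_X_sub_C (1 : ZMod 2)
  · convert irreducible_X_pow_three_add_X_add_one using 1
    linear_combination (X ^ 2 - 1) * h2
  · convert irreducible_X_pow_three_add_X_sq_add_one using 1
    linear_combination (X - X ^ 2 - 1) * h2
end
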